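/- Let H be a finite-dimensional complex vector space with a nondegenerate symmetric bilinear form, A ⊆ H a subspace on which the form restricts nondegenerately, and T = A^⊥, with O(T) acting on H by the identity on A. Then the restriction of the induced bilinear form on H^{⊗n} to the subspace (H^{⊗n})^{O(T),det} is nondegenerate; in particular, for every nonzero B ∈ (H^{⊗n})^{O(T),det} there exists B^∨ ∈ (H^{⊗n})^{O(T),det} with ⟨B, B^∨⟩ = 1. -/

import Mathlib

open scoped TensorProduct
open PiTensorProduct

noncomputable section

variable {H : Type*} [AddCommGroup H] [Module ℂ H]

/-- `φ : H ≃ H` is the extension of an isometry of `T = A^⊥` by the identity on `A`: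
it fixes `A` pointwise, preserves `T`, and preserves the bilinear form `B`. -/
structure IsExtIsometry (B : H →ₗ[ℂ] H →ₗ[ℂ] ℂ) (A T : Submodule ℂ H)
    (φ : H ≃ₗ[ℂ] H) : Prop where
  fixA : ∀ a ∈ A, φ a = a
  mapsT : ∀ x ∈ T, (φ : H →ₗ[ℂ] H) x ∈ T
  isom : ∀ x y, B (φ x) (φ y) = B x y

/-- The determinant `det(φ|_T)` of `φ` restricted to `T`. -/
def detOnT (T : Submodule ℂ H) (φ : H ≃ₗ[ℂ] H)
    (h : ∀ x ∈ T, (φ : H →ₗ[ℂ] H) x ∈ T) : ℂ :=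
  LinearMap.det ((φ : H →ₗ[ℂ] H).restrict h)

/-- The diagonal action of `φ` on `H^{⊗n}`. -/
def diagMap (n : ℕ) (φ : H ≃ₗ[ℂ] H) : (⨂[ℂ]^n H) →ₗ[ℂ] ⨂[ℂ]^n H :=
  PiTensorProduct.map fun _ : Fin n => (φ : H →ₗ[ℂ] H)

/-- The `O(T)`-invariant vectors of `H^{⊗n}`. -/
def OInv (B : H →ₗ[ℂ] H →ₗ[ℂ] ℂ) (A T : Submodule ℂ H) (n : ℕ) :
    Set (⨂[ℂ]^n H) :=
  {v | ∀ φ : H ≃ₗ[ℂ] H, IsExtIsometry B A T φ → diagMap n φ v = v}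

/-- The det-twisted vectors `(H^{⊗n})^{O(T),det}`. -/
def DetTw (B : H →ₗ[ℂ] H →ₗ[ℂ] ℂ) (A T : Submodule ℂ H) (n : ℕ) :
    Set (⨂[ℂ]^n H) :=
  {v | ∀ (φ : H ≃ₗ[ℂ] H) (h : IsExtIsometry B A T φ),
    diagMap n φ v = detOnT T φ h.mapsT • v}

/-- The `SO(T)`-invariant vectors of `H^{⊗n}`. -/
def SOInv (B : H →ₗ[ℂ] H →ₗ[ℂ] ℂ) (A T : Submodule ℂ H) (n : ℕ) :
    Set (⨂[ℂ]^n H) :=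
  {v | ∀ (φ : H ≃ₗ[ℂ] H) (h : IsExtIsometry B A T φ),
    detOnT T φ h.mapsT = 1 → diagMap n φ v = v}

/-!
Choose a `B`-orthonormal basis of `H` each of whose vectors lies in `A` or in `T`, and let
`x ↦ x̄` be complex conjugation of coordinates in it, and in the induced basis of `H^{⊗n}`.
Conjugating `φ ∈ O(T)` by `x ↦ x̄` gives again an element of `O(T)`, whose determinant is the
complex conjugate of `det φ`; hence `v̄` is det-twisted whenever `v` is. Since the induced form
makes the tensor basis orthonormal, `⟨v, v̄⟩ = ∑ |v_I|²`, which vanishes only for `v = 0`.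
-/

open Module

namespace LinearMap.BilinForm

variable {K V : Type*} [Field K] [AddCommGroup V] [Module K V] [FiniteDimensional K V]
  {Q : LinearMap.BilinForm K V}

theorem exists_orthonormal_basis [IsAlgClosed K] [Invertible (2 : K)] (hQ : Q.IsSymm)
    (hnd : Q.Nondegenerate) :
    ∃ b : Basis (Fin (finrank K V)) K V, ∀ i j, Q (b i) (b j) = if i = j then 1 else 0 := by
  obtain ⟨v, hv⟩ := exists_orthogonal_basis (isSymm_iff.1 hQ)
  have hdiag (i) : Q (v i) (v i) ≠ 0 := hv.not_isOrtho_basis_self_of_separatingLeft hnd.1 i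
  choose z hz using fun i => IsAlgClosed.exists_pow_nat_eq (Q (v i) (v i)) two_pos
  have hz0 (i) : z i ≠ 0 := fun h => hdiag i (by rw [← hz i, h, zero_pow two_ne_zero])
  refine ⟨v.unitsSMul fun i => (Units.mk0 (z i) (hz0 i))⁻¹, fun i j => ?_⟩
  simp only [Basis.unitsSMul_apply, Units.smul_def, Units.val_inv_eq_inv_val, Units.val_mk0,
    map_smul, LinearMap.smul_apply, smul_eq_mul]
  rcases eq_or_ne i j with rfl | hij
  · rw [← hz i, if_pos rfl]
    simp [sq, hz0 i]
  · rw [hv hij, if_neg hij, mul_zero, mul_zero]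

theorem exists_orthonormal_basis_adapted [IsAlgClosed K] [Invertible (2 : K)] (hQ : Q.IsSymm)
    (hnd : Q.Nondegenerate) {W : Submodule K V} (hW : (Q.restrict W).Nondegenerate) :
    ∃ b : Basis (Fin (finrank K W) ⊕ Fin (finrank K (Q.orthogonal W))) K V,
      (∀ i j, Q (b i) (b j) = if i = j then 1 else 0) ∧
        ∀ k, b k ∈ W ∨ b k ∈ Q.orthogonal W := by
  have hc : IsCompl W (Q.orthogonal W) :=
    isCompl_orthogonal_of_restrict_nondegenerate hQ.isRefl hW
  have hW' : (Q.restrict (Q.orthogonal W)).Nondegenerate := by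
    rw [restrict_nondegenerate_iff_isCompl_orthogonal hQ.isRefl,
      orthogonal_orthogonal hnd hQ.isRefl]
    exact hc.symm
  obtain ⟨bW, hbW⟩ := exists_orthonormal_basis (hQ.restrict W) hW
  obtain ⟨bT, hbT⟩ := exists_orthonormal_basis (hQ.restrict _) hW'
  have hortho {w t : V} (hw : w ∈ W) (ht : t ∈ Q.orthogonal W) : Q w t = 0 :=
    mem_orthogonal_iff.1 ht w hw
  refine ⟨(bW.prod bT).map (Submodule.prodEquivOfIsCompl _ _ hc), ?_, ?_⟩
  · rintro (i | i) (j | j)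
    · simpa using hbW i j
    · simpa using hortho (bW i).2 (bT j).2
    · simpa [hQ.eq (bT i : V)] using hortho (bW j).2 (bT i).2
    · simpa using hbT i j
  · rintro (i | i) <;> simp

end LinearMap.BilinForm

namespace Module.Basis

variable {V : Type*} [AddCommGroup V] [Module ℂ V] {ι : Type*} [Fintype ι] (b : Basis ι ℂ V)

def conj : V ≃ₗ⋆[ℂ] V :=
  b.equivFun.trans ((starLinearEquiv ℂ).trans b.equivFun.symm)

@[simp]
theorem repr_conj (x : V) (i : ι) : b.repr (b.conj x) i = star (b.repr x i) :=
  congrFun (b.equivFun.apply_symm_apply (star (b.equivFun x))) i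

@[simp]
theorem conj_conj (x : V) : b.conj (b.conj x) = x :=
  b.ext_elem fun i => by simp

@[simp]
theorem conj_self (i : ι) : b.conj (b i) = b i :=
  b.ext_elem fun j => by
    classical
    rw [repr_conj, repr_self, Finsupp.single_apply]
    split_ifs <;> simp

theorem conj_eq_sum (x : V) : b.conj x = ∑ i, star (b.repr x i) • b i := by
  simp [conj, Basis.equivFun_symm_apply]

def conjEquiv (φ : V ≃ₗ[ℂ] V) : V ≃ₗ[ℂ] V :=
  b.conj.trans (φ.trans b.conj)

theorem conjEquiv_apply (φ : V ≃ₗ[ℂ] V) (x : V) : b.conjEquiv φ x = b.conj (φ (b.conj x)) :=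
  rfl

@[simp]
theorem conjEquiv_conjEquiv (φ : V ≃ₗ[ℂ] V) : b.conjEquiv (b.conjEquiv φ) = φ := by
  ext x; simp [conjEquiv_apply]

variable [DecidableEq ι]

theorem toMatrix_conjEquiv (φ : V ≃ₗ[ℂ] V) :
    LinearMap.toMatrix b b (b.conjEquiv φ) = (LinearMap.toMatrix b b φ).map star := by
  ext i j; simp [LinearMap.toMatrix_apply, conjEquiv_apply]

theorem det_conjEquiv (φ : V ≃ₗ[ℂ] V) :
    LinearMap.det (b.conjEquiv φ : V →ₗ[ℂ] V) = star (LinearMap.det (φ : V →ₗ[ℂ] V)) := by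
  rw [← LinearMap.det_toMatrix b, ← LinearMap.det_toMatrix b, toMatrix_conjEquiv]
  exact ((starRingEnd ℂ).map_det _).symm

variable {Q : LinearMap.BilinForm ℂ V} (hb : ∀ i j, Q (b i) (b j) = if i = j then 1 else 0)
include hb

theorem apply_eq_sum_repr_mul_repr (x y : V) : Q x y = ∑ i, b.repr x i * b.repr y i := by
  rw [← LinearMap.BilinForm.sum_repr_mul_repr_mul b x y]
  simp [Finsupp.sum_fintype, hb]

theorem apply_conj_conj (x y : V) : Q (b.conj x) (b.conj y) = star (Q x y) := by
  simp [b.apply_eq_sum_repr_mul_repr hb]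

theorem eq_zero_of_apply_conj_eq_zero {x : V} (h : Q x (b.conj x) = 0) : x = 0 := by
  simp only [b.apply_eq_sum_repr_mul_repr hb, repr_conj, Complex.star_def, Complex.mul_conj,
    ← Complex.ofReal_sum, Complex.ofReal_eq_zero] at h
  have hsq := (Finset.sum_eq_zero_iff_of_nonneg fun i _ => Complex.normSq_nonneg _).1 h
  exact b.ext_elem fun i => by simpa using hsq i (Finset.mem_univ i)

theorem repr_eq_apply (x : V) (i : ι) : b.repr x i = Q (b i) x := by
  simp [b.apply_eq_sum_repr_mul_repr hb, Finsupp.single_apply]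

theorem conj_mem {W : Submodule ℂ V} (hW : ∀ i, b i ∈ W ∨ ∀ x ∈ W, Q (b i) x = 0) {x : V}
    (hx : x ∈ W) : b.conj x ∈ W := by
  rw [conj_eq_sum]
  refine W.sum_mem fun i _ => ?_
  rcases hW i with hi | hi
  · exact W.smul_mem _ hi
  · simp [b.repr_eq_apply hb, hi x hx]

end Module.Basis

section PiTensorProduct

variable {κ : Type*} [Fintype κ] [DecidableEq κ] {ι : κ → Type*} [∀ k, Fintype (ι k)]
  {M : κ → Type*} [∀ k, AddCommGroup (M k)] [∀ k, Module ℂ (M k)] (b : ∀ k, Basis (ι k) ℂ (M k))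

theorem Module.Basis.piTensorProduct_conj_tprod (x : ∀ k, M k) :
    (Basis.piTensorProduct b).conj (⨂ₜ[ℂ] k, x k) = ⨂ₜ[ℂ] k, (b k).conj (x k) :=
  (Basis.piTensorProduct b).ext_elem fun p => by simp [star_prod]

theorem PiTensorProduct.map_conjEquiv_conj (φ : ∀ k, M k ≃ₗ[ℂ] M k) (v : (⨂[ℂ] k, M k)) :
    map (fun k => ((b k).conjEquiv (φ k) : M k →ₗ[ℂ] M k)) ((Basis.piTensorProduct b).conj v) =
      (Basis.piTensorProduct b).conj (map (fun k => (φ k : M k →ₗ[ℂ] M k)) v) := by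
  induction v using PiTensorProduct.induction_on with
  | smul_tprod r x =>
    simp only [map_smulₛₗ, map_tprod, Basis.piTensorProduct_conj_tprod, LinearEquiv.coe_coe,
      Basis.conjEquiv_apply, Basis.conj_conj, RingHom.id_apply]
  | add v w hv hw => simp only [map_add, hv, hw]

end PiTensorProduct

theorem Module.Basis.piTensorProduct_orthonormal {R κ : Type*} [CommRing R] [Fintype κ]
    {ι : κ → Type*} [∀ k, DecidableEq (ι k)] {M : κ → Type*}
    [∀ k, AddCommGroup (M k)] [∀ k, Module R (M k)] (b : ∀ k, Basis (ι k) R (M k))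
    {Q : ∀ k, LinearMap.BilinForm R (M k)}
    (hb : ∀ k i j, Q k (b k i) (b k j) = if i = j then 1 else 0)
    {QT : LinearMap.BilinForm R (⨂[R] k, M k)}
    (hQT : ∀ x y : ∀ k, M k, QT (⨂ₜ[R] k, x k) (⨂ₜ[R] k, y k) = ∏ k, Q k (x k) (y k))
    (p q : ∀ k, ι k) :
    QT (Basis.piTensorProduct b p) (Basis.piTensorProduct b q) = if p = q then 1 else 0 := by
  simp [hQT, hb, Finset.prod_boole, funext_iff]

theorem LinearMap.det_eq_det_restrict_mul_det_restrict {K V : Type*} [Field K] [AddCommGroup V]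
    [Module K V] [FiniteDimensional K V] {p q : Submodule K V} (hpq : IsCompl p q)
    {f : V →ₗ[K] V} (hp : ∀ x ∈ p, f x ∈ p) (hq : ∀ x ∈ q, f x ∈ q) :
    LinearMap.det f = LinearMap.det (f.restrict hp) * LinearMap.det (f.restrict hq) := by
  let e := Submodule.prodEquivOfIsCompl p q hpq
  have hconj :
      e.toLinearMap ∘ₗ (f.restrict hp).prodMap (f.restrict hq) ∘ₗ e.symm.toLinearMap = f := by
    ext v
    obtain ⟨y, rfl⟩ := e.surjective v
    simp [e]
  rw [← LinearMap.det_prodMap, ← LinearMap.det_conj _ e, hconj]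

namespace IsExtIsometry

variable {B : LinearMap.BilinForm ℂ H} {A : Submodule ℂ H} {φ : H ≃ₗ[ℂ] H}

theorem detOnT_eq_det [FiniteDimensional ℂ H] {T : Submodule ℂ H} (hAT : IsCompl A T)
    (hφ : IsExtIsometry B A T φ) :
    detOnT T φ hφ.mapsT = LinearMap.det (φ : H →ₗ[ℂ] H) := by
  have hA : ∀ a ∈ A, (φ : H →ₗ[ℂ] H) a ∈ A := fun a ha => by simpa [hφ.fixA a ha] using ha
  have hid : (φ : H →ₗ[ℂ] H).restrict hA = LinearMap.id := by
    ext a; simp [hφ.fixA a a.2]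
  rw [LinearMap.det_eq_det_restrict_mul_det_restrict hAT hA hφ.mapsT, hid, LinearMap.det_id,
    one_mul, detOnT]

variable {ι : Type*} [Fintype ι] [DecidableEq ι] {b : Basis ι ℂ H}

theorem conjEquiv (hB : LinearMap.BilinForm.IsSymm B)
    (hb : ∀ i j, B (b i) (b j) = if i = j then 1 else 0)
    (hbA : ∀ i, b i ∈ A ∨ b i ∈ B.orthogonal A) (hφ : IsExtIsometry B A (B.orthogonal A) φ) :
    IsExtIsometry B A (B.orthogonal A) (b.conjEquiv φ) := by
  have hconjA : ∀ x ∈ A, b.conj x ∈ A := fun x => b.conj_mem hb fun i => (hbA i).imp_right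
    fun hi x hx => by rw [hB.eq]; exact LinearMap.BilinForm.mem_orthogonal_iff.1 hi x hx
  have hconjT : ∀ x ∈ B.orthogonal A, b.conj x ∈ B.orthogonal A := fun x =>
    b.conj_mem hb fun i => (hbA i).symm.imp_right
      fun hi x hx => LinearMap.BilinForm.mem_orthogonal_iff.1 hx _ hi
  refine ⟨fun a ha => ?_, fun x hx => ?_, fun x y => ?_⟩
  · rw [Basis.conjEquiv_apply, hφ.fixA _ (hconjA a ha), Basis.conj_conj]
  · exact hconjT _ (hφ.mapsT _ (hconjT x hx))
  · rw [Basis.conjEquiv_apply, Basis.conjEquiv_apply, b.apply_conj_conj hb, hφ.isom,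
      b.apply_conj_conj hb, star_star]

end IsExtIsometry

section DetTw

variable {B : LinearMap.BilinForm ℂ H} {A T : Submodule ℂ H} {n : ℕ}

theorem smul_mem_detTw {v : ⨂[ℂ]^n H} (hv : v ∈ DetTw B A T n) (c : ℂ) :
    c • v ∈ DetTw B A T n := fun φ hφ => by
  rw [map_smul, hv φ hφ, smul_comm]

theorem conj_mem_detTw [FiniteDimensional ℂ H] {ι : Type*} [Fintype ι] [DecidableEq ι]
    {b : Basis ι ℂ H} (hB : LinearMap.BilinForm.IsSymm B) (hAT : IsCompl A (B.orthogonal A))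
    (hb : ∀ i j, B (b i) (b j) = if i = j then 1 else 0)
    (hbA : ∀ i, b i ∈ A ∨ b i ∈ B.orthogonal A) {v : ⨂[ℂ]^n H}
    (hv : v ∈ DetTw B A (B.orthogonal A) n) :
    (Basis.piTensorProduct fun _ => b).conj v ∈ DetTw B A (B.orthogonal A) n := by
  intro φ hφ
  have hψ := hφ.conjEquiv hB hb hbA
  have hdet : detOnT _ (b.conjEquiv φ) hψ.mapsT = star (detOnT _ φ hφ.mapsT) := by
    rw [hψ.detOnT_eq_det hAT, hφ.detOnT_eq_det hAT, b.det_conjEquiv]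
  calc diagMap n φ ((Basis.piTensorProduct fun _ => b).conj v)
      = (Basis.piTensorProduct fun _ => b).conj (diagMap n (b.conjEquiv φ) v) := by
        have h := map_conjEquiv_conj (fun _ : Fin n => b) (fun _ => b.conjEquiv φ) v
        simp only [Basis.conjEquiv_conjEquiv] at h
        exact h
    _ = detOnT _ φ hφ.mapsT • (Basis.piTensorProduct fun _ => b).conj v := by
        rw [hv _ hψ, map_smulₛₗ, hdet, ← Complex.star_def, star_star]

end DetTw

/-- Let `H` be a finite-dimensional complex vector space with nondegenerate symmetric
bilinear form `B`, `A ⊆ H` a subspace on which `B` restricts nondegenerately and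
`T = A^⊥`, with `O(T)` acting on `H` by the identity on `A`. Then the restriction of the
induced bilinear form `BT` on `H^{⊗n}` (characterized on pure tensors by
`BT (x_1 ⊗ ⋯ ⊗ x_n) (y_1 ⊗ ⋯ ⊗ y_n) = ∏ i, B x_i y_i`) to `(H^{⊗n})^{O(T),det}` is
nondegenerate; in particular every nonzero `v ∈ (H^{⊗n})^{O(T),det}` admits
`v^∨ ∈ (H^{⊗n})^{O(T),det}` with `BT v v^∨ = 1`. -/
theorem detTwisted_pairing_nondegenerate
    (H : Type*) [AddCommGroup H] [Module ℂ H] [FiniteDimensional ℂ H]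
    (B : H →ₗ[ℂ] H →ₗ[ℂ] ℂ)
    (hsymm : ∀ x y, B x y = B y x)
    (hnd : ∀ x, (∀ y, B x y = 0) → x = 0)
    (A : Submodule ℂ H)
    (hAnd : ∀ x ∈ A, (∀ y ∈ A, B x y = 0) → x = 0)
    (T : Submodule ℂ H)
    (hT : ∀ x, x ∈ T ↔ ∀ a ∈ A, B a x = 0)
    (n : ℕ)
    (BT : (⨂[ℂ]^n H) →ₗ[ℂ] (⨂[ℂ]^n H) →ₗ[ℂ] ℂ)
    (hBT : ∀ x y : Fin n → H,
      BT (⨂ₜ[ℂ] i, x i) (⨂ₜ[ℂ] i, y i) = ∏ i, B (x i) (y i)) :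
    (∀ v ∈ DetTw B A T n, (∀ w ∈ DetTw B A T n, BT v w = 0) → v = 0)
    ∧ (∀ v ∈ DetTw B A T n, v ≠ 0 → ∃ w ∈ DetTw B A T n, BT v w = 1) := by
  have hB : LinearMap.BilinForm.IsSymm B := ⟨hsymm⟩
  have hBnd : LinearMap.BilinForm.Nondegenerate B :=
    hB.isRefl.nondegenerate_iff_separatingLeft.2 hnd
  have hBA : (LinearMap.BilinForm.restrict B A).Nondegenerate :=
    (hB.restrict A).isRefl.nondegenerate_iff_separatingLeft.2 fun x hx =>
      Subtype.ext (hAnd x x.2 fun y hy => hx ⟨y, hy⟩)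
  obtain rfl : T = LinearMap.BilinForm.orthogonal B A :=
    Submodule.ext fun x => (hT x).trans LinearMap.BilinForm.mem_orthogonal_iff.symm
  have hAT := LinearMap.BilinForm.isCompl_orthogonal_of_restrict_nondegenerate hB.isRefl hBA
  obtain ⟨b, hb, hbA⟩ := LinearMap.BilinForm.exists_orthonormal_basis_adapted hB hBnd hBA
  set β := Basis.piTensorProduct fun _ : Fin n => b
  have hβ := Basis.piTensorProduct_orthonormal (fun _ : Fin n => b) (fun _ => hb) hBT
  have hconj (v) (hv : v ∈ DetTw B A _ n) := conj_mem_detTw hB hAT hb hbA hv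
  refine ⟨fun v hv hperp => β.eq_zero_of_apply_conj_eq_zero hβ (hperp _ (hconj v hv)),
    fun v hv hv0 => ?_⟩
  have hne : BT v (β.conj v) ≠ 0 := fun h => hv0 (β.eq_zero_of_apply_conj_eq_zero hβ h)
  exact ⟨(BT v (β.conj v))⁻¹ • β.conj v, smul_mem_detTw (hconj v hv) _, by
    rw [map_smul, smul_eq_mul, inv_mul_cancel₀ hne]⟩
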